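/- arXiv:1410.4582 — 5 statements merged into one kernel-verified Lean document; each statement's English description precedes it below -/
import Mathlib

section
/- Let d ≥ 2 and let Δ be a pure d-dimensional flag-no-square simplicial complex in which every (d−1)-dimensional face is contained in at least two facets (no free (d−1)-faces). Then the number of facets satisfies f_d(Δ) > (25/12)^{2^{d−2}}. -/
open Finset

variable {V : Type} [DecidableEq V] [Fintype V]

/-- `K` is (the set of faces of) an abstract simplicial complex on `V`:
nonempty (contains the empty face) and closed under taking subsets. -/
def IsComplex (K : Finset (Finset V)) : Prop :=
  ∅ ∈ K ∧ ∀ σ ∈ K, ∀ τ ⊆ σ, τ ∈ K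

/-- The facets (maximal faces) of `K`. -/
def facets (K : Finset (Finset V)) : Finset (Finset V) :=
  K.filter fun σ => ∀ τ ∈ K, σ ⊆ τ → τ = σ

/-- `K` is pure `d`-dimensional: every facet has `d + 1` vertices. -/
def IsPure (K : Finset (Finset V)) (d : ℕ) : Prop :=
  ∀ σ ∈ facets K, σ.card = d + 1

/-- `fNum K i` is the number of `i`-dimensional faces (faces with `i + 1` vertices). -/
def fNum (K : Finset (Finset V)) (i : ℕ) : ℕ :=
  (K.filter fun σ => σ.card = i + 1).card

/-- `K` is flag: every set of vertices of `K` that are pairwise joined by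
edges of `K` is a face of `K`. -/
def IsFlag (K : Finset (Finset V)) : Prop :=
  ∀ τ : Finset V, (∀ v ∈ τ, ({v} : Finset V) ∈ K) →
    (∀ u ∈ τ, ∀ w ∈ τ, u ≠ w → ({u, w} : Finset V) ∈ K) → τ ∈ K

/-- `K` has no induced 4-cycle: there are no four distinct vertices `a b c d`
with `ab, bc, cd, da` faces and `ac, bd` non-faces. -/
def NoSquare (K : Finset (Finset V)) : Prop :=
  ¬ ∃ a b c d : V, ({a, b, c, d} : Finset V).card = 4 ∧
    ({a, b} : Finset V) ∈ K ∧ ({b, c} : Finset V) ∈ K ∧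
    ({c, d} : Finset V) ∈ K ∧ ({d, a} : Finset V) ∈ K ∧
    ({a, c} : Finset V) ∉ K ∧ ({b, d} : Finset V) ∉ K

/-- Every face with `d` vertices (i.e. of dimension `d - 1`) is contained in
at least two facets. -/
def NoFree (K : Finset (Finset V)) (d : ℕ) : Prop :=
  ∀ σ ∈ K, σ.card = d → 2 ≤ ((facets K).filter fun F => σ ⊆ F).card

/-- The link of a face `σ`. -/
def link (K : Finset (Finset V)) (σ : Finset V) : Finset (Finset V) :=
  K.filter fun τ => τ ∩ σ = ∅ ∧ τ ∪ σ ∈ K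

/-!
Switching a vertex `v` of a facet `F` across the ridge `F \ {v}` gives, by the absence of free
ridges and flagness, a facet `(F \ {v}) ∪ {u}` with `uv` a non-edge; the absence of induced
squares makes `u` determine `F`. So the vertices `u_F` attached to the facets `F ∋ v` are
distinct, each facet contains at most `d + 1` of them, and double counting the facets through
them gives `m² ≤ (d + 1) f_d` when every vertex lies in at least `m` facets. Links of vertices
inherit all hypotheses, so `m ≥ f_{d-1}` of a link, and induction yields
`f_d ≥ (d + 4) (25/12)^(2^(d-2))`. For the base, the facets through `v`, their switches and the
facets through one `u_F` overlap in a single facet, so `f_d ≥ 3m - 1`; this gives `f_1 ≥ 5` and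
then `f_2 ≥ 14`.
-/

section Faces

omit [Fintype V]

variable {K : Finset (Finset V)} {σ τ : Finset V}

omit [DecidableEq V] in
theorem IsComplex.mem_of_subset (hK : IsComplex K) (hσ : σ ∈ K) (h : τ ⊆ σ) : τ ∈ K :=
  hK.2 σ hσ τ h

omit [DecidableEq V] in
theorem IsComplex.singleton_mem (hK : IsComplex K) (hσ : σ ∈ K) {x : V} (hx : x ∈ σ) :
    ({x} : Finset V) ∈ K :=
  hK.mem_of_subset hσ (singleton_subset_iff.mpr hx)

theorem IsComplex.pair_mem (hK : IsComplex K) (hσ : σ ∈ K) {x y : V} (hx : x ∈ σ)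
    (hy : y ∈ σ) : ({x, y} : Finset V) ∈ K :=
  hK.mem_of_subset hσ (insert_subset hx (singleton_subset_iff.mpr hy))

theorem IsComplex.eq_or_adj_of_mem_insert_erase (hK : IsComplex K) (hσ : σ ∈ K) {v x y : V}
    (hv : v ∈ σ) (hx : x ∈ insert y (σ.erase v)) :
    x = y ∨ ({x, v} : Finset V) ∈ K ∧ x ≠ v := by
  rcases mem_insert.mp hx with h | h
  · exact .inl h
  · obtain ⟨hxv, hxσ⟩ := mem_erase.mp h
    exact .inr ⟨hK.pair_mem hσ hxσ hv, hxv⟩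

theorem IsFlag.union_mem (hflag : IsFlag K) (hK : IsComplex K) (hσ : σ ∈ K) (hτ : τ ∈ K)
    (h : ∀ x ∈ σ, ∀ y ∈ τ, x ≠ y → ({x, y} : Finset V) ∈ K) : σ ∪ τ ∈ K := by
  refine hflag _ (fun x hx => ?_) (fun x hx y hy hxy => ?_)
  · rcases mem_union.mp hx with hx | hx
    exacts [hK.singleton_mem hσ hx, hK.singleton_mem hτ hx]
  · rcases mem_union.mp hx with hx | hx <;> rcases mem_union.mp hy with hy | hy
    · exact hK.pair_mem hσ hx hy
    · exact h x hx y hy hxy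
    · exact pair_comm y x ▸ h y hy x hx hxy.symm
    · exact hK.pair_mem hτ hx hy

theorem NoSquare.pair_mem_of_common_neighbors (hns : NoSquare K) {u v a b : V} (huv : u ≠ v)
    (huvK : ({u, v} : Finset V) ∉ K) (hab : a ≠ b) (hau : ({a, u} : Finset V) ∈ K)
    (hav : ({a, v} : Finset V) ∈ K) (hbu : ({b, u} : Finset V) ∈ K)
    (hbv : ({b, v} : Finset V) ∈ K) : ({a, b} : Finset V) ∈ K := by
  have hne : ∀ x, ({x, u} : Finset V) ∈ K → ({x, v} : Finset V) ∈ K → x ≠ u ∧ x ≠ v := by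
    rintro x hxu hxv
    refine ⟨fun h => huvK (h ▸ hxv), fun h => huvK ?_⟩
    rwa [h, pair_comm] at hxu
  obtain ⟨hau', hav'⟩ := hne a hau hav
  obtain ⟨hbu', hbv'⟩ := hne b hbu hbv
  by_contra habK
  refine hns ⟨u, a, v, b, card_eq_four.mpr ⟨u, a, v, b, hau'.symm, huv, hbu'.symm, hav', hab,
    hbv'.symm, rfl⟩, pair_comm a u ▸ hau, hav, pair_comm b v ▸ hbv, hbu, huvK, habK⟩

end Faces

section Facets

variable {K : Finset (Finset V)} {d : ℕ} {σ : Finset V}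

theorem mem_facets : σ ∈ facets K ↔ σ ∈ K ∧ ∀ τ ∈ K, σ ⊆ τ → τ = σ :=
  mem_filter

theorem exists_facet_superset (hσ : σ ∈ K) :
    ∃ F ∈ facets K, σ ⊆ F := by
  obtain ⟨F, hF, hmax⟩ := (K.filter (σ ⊆ ·)).exists_max_image card ⟨σ, mem_filter.mpr ⟨hσ, le_rfl⟩⟩
  rw [mem_filter] at hF
  refine ⟨F, mem_facets.mpr ⟨hF.1, fun τ hτ hFτ => ?_⟩, hF.2⟩
  exact (eq_of_subset_of_card_le hFτ (hmax τ (mem_filter.mpr ⟨hτ, hF.2.trans hFτ⟩))).symm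

theorem IsComplex.exists_vertex (hK : IsComplex K) (hpure : IsPure K d) :
    ∃ v, ({v} : Finset V) ∈ K := by
  obtain ⟨F, hF, -⟩ := exists_facet_superset hK.1
  obtain ⟨v, hv⟩ := card_pos.mp (by rw [hpure F hF]; exact d.succ_pos)
  exact ⟨v, hK.singleton_mem (mem_facets.mp hF).1 hv⟩

theorem IsPure.mem_facets_of_card (hpure : IsPure K d) (hσ : σ ∈ K)
    (hcard : σ.card = d + 1) : σ ∈ facets K := by
  obtain ⟨F, hF, hσF⟩ := exists_facet_superset hσ
  rwa [eq_of_subset_of_card_le hσF (by rw [hpure F hF, hcard])]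

theorem IsPure.fNum_eq_card_facets (hpure : IsPure K d) :
    fNum K d = (facets K).card := by
  unfold fNum
  congr 1
  ext σ
  rw [mem_filter]
  exact ⟨fun h => hpure.mem_facets_of_card h.1 h.2,
    fun h => ⟨(mem_facets.mp h).1, hpure σ h⟩⟩

end Facets

def facetsContaining (K : Finset (Finset V)) (v : V) : Finset (Finset V) :=
  (facets K).filter (v ∈ ·)

section Switch

variable {K : Finset (Finset V)} {d : ℕ} {F F' : Finset V} {u v : V}

theorem mem_facetsContaining : F ∈ facetsContaining K v ↔ F ∈ facets K ∧ v ∈ F :=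
  mem_filter

theorem exists_switch (hK : IsComplex K) (hpure : IsPure K d) (hflag : IsFlag K)
    (hfree : NoFree K d) (hF : F ∈ facets K) (hv : v ∈ F) :
    ∃ u, ({u, v} : Finset V) ∉ K ∧ insert u (F.erase v) ∈ facets K := by
  have hFK := (mem_facets.mp hF).1
  have hσ : (F.erase v).card = d := by rw [card_erase_of_mem hv, hpure F hF]; rfl
  obtain ⟨G, hG, hGF⟩ := exists_mem_ne (hfree _ (hK.mem_of_subset hFK (erase_subset v F)) hσ) F
  obtain ⟨hGf, hσG⟩ := mem_filter.mp hG
  have hGK := (mem_facets.mp hGf).1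
  obtain ⟨u, huG, huF⟩ : ∃ u ∈ G, u ∉ F := by
    by_contra! h
    exact hGF ((mem_facets.mp hGf).2 F hFK h).symm
  have hGeq : insert u (F.erase v) = G :=
    eq_of_subset_of_card_le (insert_subset huG hσG)
      (by rw [hpure G hGf, card_insert_of_notMem (fun h => huF (mem_of_mem_erase h)), hσ])
  refine ⟨u, fun huv => huF ?_, hGeq ▸ hGf⟩
  -- Otherwise `F ∪ G = insert u F` would be a clique, hence a face strictly containing `F`.
  have hFG : F ∪ G ∈ K := hflag.union_mem hK hFK hGK fun x hx y hy _ => by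
    by_cases hyF : y ∈ F
    · exact hK.pair_mem hFK hx hyF
    by_cases hxG : x ∈ G
    · exact hK.pair_mem hGK hxG hy
    have hxv : x = v := by_contra fun h => hxG (hσG (mem_erase.mpr ⟨h, hx⟩))
    have hyu : y = u := by
      rw [← hGeq] at hy
      exact (mem_insert.mp hy).resolve_right fun h => hyF (mem_of_mem_erase h)
    rwa [hxv, hyu, pair_comm]
  exact (mem_facets.mp hF).2 _ hFG subset_union_left ▸ mem_union_right F huG

theorem eq_of_insert_erase_mem (hK : IsComplex K) (hflag : IsFlag K) (hns : NoSquare K)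
    (hF : F ∈ facets K) (hF' : F' ∈ facets K) (hv : v ∈ F) (hv' : v ∈ F')
    (huv : ({u, v} : Finset V) ∉ K) (hu : insert u (F.erase v) ∈ K)
    (hu' : insert u (F'.erase v) ∈ K) : F = F' := by
  have hFK := (mem_facets.mp hF).1
  have hF'K := (mem_facets.mp hF').1
  have hne : u ≠ v := by
    rintro rfl
    exact huv (by simpa using hK.singleton_mem hFK hv)
  have hunion : F ∪ F' ∈ K := hflag.union_mem hK hFK hF'K fun x hx y hy hxy => by
    by_cases hxv : x = v
    · exact hxv ▸ hK.pair_mem hF'K hv' hy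
    by_cases hyv : y = v
    · exact hyv ▸ hK.pair_mem hFK hx hv
    exact hns.pair_mem_of_common_neighbors hne huv hxy
      (hK.pair_mem hu (mem_insert_of_mem (mem_erase.mpr ⟨hxv, hx⟩)) (mem_insert_self u _))
      (hK.pair_mem hFK hx hv)
      (hK.pair_mem hu' (mem_insert_of_mem (mem_erase.mpr ⟨hyv, hy⟩)) (mem_insert_self u _))
      (hK.pair_mem hF'K hy hv')
  exact ((mem_facets.mp hF).2 _ hunion subset_union_left).symm.trans
    ((mem_facets.mp hF').2 _ hunion subset_union_right)

theorem exists_injOn_switch (hK : IsComplex K) (hpure : IsPure K d) (hflag : IsFlag K)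
    (hns : NoSquare K) (hfree : NoFree K d) (v : V) :
    ∃ φ : Finset V → V, Set.InjOn φ (facetsContaining K v) ∧ ∀ F ∈ facetsContaining K v,
      ({φ F, v} : Finset V) ∉ K ∧ insert (φ F) (F.erase v) ∈ facets K := by
  have hswitch := fun F (hF : F ∈ facetsContaining K v) =>
    exists_switch hK hpure hflag hfree (mem_facetsContaining.mp hF).1 (mem_facetsContaining.mp hF).2
  have : Nonempty V := ⟨v⟩
  choose! φ hφ using hswitch
  refine ⟨φ, fun F hF F' hF' h => ?_, hφ⟩
  obtain ⟨hFf, hvF⟩ := mem_facetsContaining.mp hF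
  obtain ⟨hF'f, hvF'⟩ := mem_facetsContaining.mp hF'
  exact eq_of_insert_erase_mem hK hflag hns hFf hF'f hvF hvF' (hφ F hF).1
    (mem_facets.mp (hφ F hF).2).1 (h ▸ (mem_facets.mp (hφ F' hF').2).1)

end Switch

section Link

variable {K : Finset (Finset V)} {d : ℕ} {τ : Finset V} {w : V}

section

omit [Fintype V]

theorem mem_link_singleton : τ ∈ link K {w} ↔ τ ∈ K ∧ w ∉ τ ∧ insert w τ ∈ K := by
  simp only [link, mem_filter, ← disjoint_iff_inter_eq_empty, disjoint_singleton_right,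
    union_comm τ, ← insert_eq]

theorem IsComplex.link_singleton (hK : IsComplex K) (hw : ({w} : Finset V) ∈ K) :
    IsComplex (link K {w}) := by
  refine ⟨mem_link_singleton.mpr ⟨hK.1, notMem_empty w, by simpa using hw⟩, fun σ hσ τ hτσ => ?_⟩
  obtain ⟨hσK, hwσ, hwσK⟩ := mem_link_singleton.mp hσ
  exact mem_link_singleton.mpr ⟨hK.mem_of_subset hσK hτσ, fun h => hwσ (hτσ h),
    hK.mem_of_subset hwσK (insert_subset_insert w hτσ)⟩

theorem mem_link_singleton_of_forall (hK : IsComplex K) (hflag : IsFlag K)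
    (hw : ({w} : Finset V) ∈ K) (hτ : τ ∈ K) (h : ∀ x ∈ τ, ({x} : Finset V) ∈ link K {w}) :
    τ ∈ link K {w} := by
  have hwx : ∀ x ∈ τ, ({w, x} : Finset V) ∈ K ∧ x ≠ w := fun x hx => by
    obtain ⟨-, hxw, hwxK⟩ := mem_link_singleton.mp (h x hx)
    exact ⟨hwxK, fun e => hxw (e ▸ mem_singleton_self x)⟩
  refine mem_link_singleton.mpr ⟨hτ, fun hwτ => (hwx w hwτ).2 rfl, ?_⟩
  rw [insert_eq]
  exact hflag.union_mem hK hw hτ fun x hx y hy _ => mem_singleton.mp hx ▸ (hwx y hy).1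

theorem IsFlag.link_singleton (hflag : IsFlag K) (hK : IsComplex K)
    (hw : ({w} : Finset V) ∈ K) : IsFlag (link K {w}) := fun τ hv he =>
  mem_link_singleton_of_forall hK hflag hw
    (hflag τ (fun x hx => (mem_link_singleton.mp (hv x hx)).1)
      fun x hx y hy hxy => (mem_link_singleton.mp (he x hx y hy hxy)).1) hv

theorem NoSquare.link_singleton (hns : NoSquare K) (hK : IsComplex K) (hflag : IsFlag K)
    (hw : ({w} : Finset V) ∈ K) : NoSquare (link K {w}) := by
  rintro ⟨a, b, c, e, hcard, hab, hbc, hce, hea, hac, hbe⟩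
  have hlink := hK.link_singleton hw
  -- The link of a vertex in a flag complex is an induced subcomplex.
  have lift : ∀ {x y z}, ({x, z} : Finset V) ∈ link K {w} → ({y, z} : Finset V) ∈ link K {w} →
      ({x, y} : Finset V) ∈ K → ({x, y} : Finset V) ∈ link K {w} := by
    intro x y z hxz hyz hxy
    refine mem_link_singleton_of_forall hK hflag hw hxy fun t ht => ?_
    rcases mem_insert.mp ht with rfl | ht
    · exact hlink.singleton_mem hxz (mem_insert_self t _)
    · exact mem_singleton.mp ht ▸ hlink.singleton_mem hyz (mem_insert_self y _)
  refine hns ⟨a, b, c, e, hcard, (mem_link_singleton.mp hab).1, (mem_link_singleton.mp hbc).1,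
    (mem_link_singleton.mp hce).1, (mem_link_singleton.mp hea).1, fun h => hac (lift hab ?_ h),
    fun h => hbe (lift hbc ?_ h)⟩
  · rwa [pair_comm]
  · rwa [pair_comm]

end

theorem mem_facets_link_singleton (hK : IsComplex K) :
    τ ∈ facets (link K {w}) ↔ w ∉ τ ∧ insert w τ ∈ facets K := by
  constructor
  · intro hτ
    obtain ⟨hτl, hτmax⟩ := mem_facets.mp hτ
    obtain ⟨-, hwτ, hins⟩ := mem_link_singleton.mp hτl
    refine ⟨hwτ, mem_facets.mpr ⟨hins, fun G hG hsub => ?_⟩⟩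
    have hwG : w ∈ G := hsub (mem_insert_self w τ)
    have hGe : G.erase w ∈ link K {w} := mem_link_singleton.mpr
      ⟨hK.mem_of_subset hG (erase_subset w G), notMem_erase w G, by rwa [insert_erase hwG]⟩
    rw [← insert_erase hwG, hτmax _ hGe (erase_insert hwτ ▸ erase_subset_erase w hsub)]
  · rintro ⟨hwτ, hins⟩
    obtain ⟨hinsK, hmax⟩ := mem_facets.mp hins
    refine mem_facets.mpr ⟨mem_link_singleton.mpr
      ⟨hK.mem_of_subset hinsK (subset_insert w τ), hwτ, hinsK⟩, fun σ hσ hτσ => ?_⟩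
    obtain ⟨-, hwσ, hσK⟩ := mem_link_singleton.mp hσ
    rw [← erase_insert hwσ, hmax _ hσK (insert_subset_insert w hτσ), erase_insert hwτ]

theorem IsPure.link_singleton (hpure : IsPure K (d + 1)) (hK : IsComplex K) :
    IsPure (link K {w}) d := fun τ hτ => by
  obtain ⟨hwτ, hins⟩ := (mem_facets_link_singleton hK).mp hτ
  have := hpure _ hins
  rw [card_insert_of_notMem hwτ] at this
  omega

theorem NoFree.link_singleton (hfree : NoFree K (d + 1)) (hK : IsComplex K) :
    NoFree (link K {w}) d := by
  intro σ hσ hcard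
  obtain ⟨-, hwσ, hσK⟩ := mem_link_singleton.mp hσ
  refine (hfree _ hσK (by rw [card_insert_of_notMem hwσ, hcard])).trans
    (card_le_card_of_injOn (·.erase w) (fun G hG => ?_) fun G hG G' hG' h => ?_)
  · obtain ⟨hGf, hsub⟩ := mem_filter.mp hG
    have hwG := hsub (mem_insert_self w σ)
    exact mem_filter.mpr ⟨(mem_facets_link_singleton hK).mpr ⟨notMem_erase w G,
      by rwa [insert_erase hwG]⟩, erase_insert hwσ ▸ erase_subset_erase w hsub⟩
  · have hwG := (mem_filter.mp hG).2 (mem_insert_self w σ)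
    have hwG' := (mem_filter.mp hG').2 (mem_insert_self w σ)
    rw [← insert_erase hwG, ← insert_erase hwG']
    exact congrArg (insert w) h

theorem card_facets_link_singleton (hK : IsComplex K) :
    (facets (link K {w})).card = (facetsContaining K w).card :=
  card_nbij' (insert w) (·.erase w)
    (fun _ hτ => mem_facetsContaining.mpr
      ⟨((mem_facets_link_singleton hK).mp hτ).2, mem_insert_self _ _⟩)
    (fun G hG => (mem_facets_link_singleton hK).mpr ⟨notMem_erase w G,
      by rw [insert_erase (mem_facetsContaining.mp hG).2]; exact (mem_facetsContaining.mp hG).1⟩)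
    (fun _ hτ => erase_insert ((mem_facets_link_singleton hK).mp hτ).1)
    (fun _ hG => insert_erase (mem_facetsContaining.mp hG).2)

end Link

structure IsPureFlagNoSquareNoFree (K : Finset (Finset V)) (d : ℕ) : Prop where
  complex : IsComplex K
  pure : IsPure K d
  flag : IsFlag K
  noSquare : NoSquare K
  noFree : NoFree K d

namespace IsPureFlagNoSquareNoFree

variable {K : Finset (Finset V)} {d m : ℕ}

theorem card_facetsContaining_mul_le (hK : IsPureFlagNoSquareNoFree K d)
    (hm : ∀ w, ({w} : Finset V) ∈ K → m ≤ (facetsContaining K w).card) (v : V) :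
    (facetsContaining K v).card * m ≤ (facets K).card * (d + 1) := by
  obtain ⟨φ, hinj, hφ⟩ := exists_injOn_switch hK.complex hK.pure hK.flag hK.noSquare hK.noFree v
  refine card_mul_le_card_mul (fun F G => φ F ∈ G) (fun F hF => ?_) (fun G hG => ?_)
  · exact hm _ (hK.complex.singleton_mem (mem_facets.mp (hφ F hF).2).1 (mem_insert_self _ _))
  · rw [← hK.pure G hG]
    exact card_le_card_of_injOn φ (fun F hF => (mem_bipartiteBelow _).mp hF |>.2)
      (hinj.mono fun F hF => ((mem_bipartiteBelow _).mp hF).1)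

theorem two_mul_card_facetsContaining_add_le (hK : IsPureFlagNoSquareNoFree K d)
    (hm : ∀ w, ({w} : Finset V) ∈ K → m ≤ (facetsContaining K w).card) {v : V}
    (hv : ({v} : Finset V) ∈ K) :
    2 * (facetsContaining K v).card + m ≤ (facets K).card + 1 := by
  obtain ⟨φ, hinj, hφ⟩ := exists_injOn_switch hK.complex hK.pure hK.flag hK.noSquare hK.noFree v
  set A := facetsContaining K v
  set ψ : Finset V → Finset V := fun F => insert (φ F) (F.erase v)
  obtain ⟨F₁, hF₁, hvF₁⟩ := exists_facet_superset hv
  have hF₁A : F₁ ∈ A := mem_facetsContaining.mpr ⟨hF₁, singleton_subset_iff.mp hvF₁⟩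
  set u := φ F₁
  have mem_ψ : ∀ F ∈ A, ∀ x ∈ ψ F, x = φ F ∨ ({x, v} : Finset V) ∈ K ∧ x ≠ v := fun F hF _ hx =>
    hK.complex.eq_or_adj_of_mem_insert_erase (mem_facets.mp (mem_facetsContaining.mp hF).1).1
      (mem_facetsContaining.mp hF).2 hx
  have hψinj : Set.InjOn ψ A := fun F hF F' hF' h =>
    hinj hF hF' ((mem_ψ F' hF' (φ F) (h ▸ mem_insert_self _ _)).resolve_right
      fun h' => (hφ F hF).1 h'.1)
  have hdisj : Disjoint A (A.image ψ) := by
    refine disjoint_right.mpr fun G hG hvG => ?_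
    obtain ⟨F, hF, rfl⟩ := mem_image.mp hG
    rcases mem_ψ F hF v (mem_facetsContaining.mp hvG).2 with h | h
    · exact (hφ F hF).1 (by rw [← h]; simpa using hv)
    · exact h.2 rfl
  have hinter : (A ∪ A.image ψ) ∩ facetsContaining K u ⊆ {ψ F₁} := by
    intro G hG
    obtain ⟨hG, hGf, huG⟩ := mem_inter.mp hG |>.imp_right mem_facetsContaining.mp
    rcases mem_union.mp hG with hGA | hGB
    · exact absurd (hK.complex.pair_mem (mem_facets.mp hGf).1 huG (mem_facetsContaining.mp hGA).2)
        (hφ F₁ hF₁A).1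
    obtain ⟨F, hF, rfl⟩ := mem_image.mp hGB
    rcases mem_ψ F hF u huG with h | h
    · rw [hinj hF hF₁A h.symm, mem_singleton]
    · exact absurd h.1 (hφ F₁ hF₁A).1
  have hu : m ≤ (facetsContaining K u).card :=
    hm u (hK.complex.singleton_mem (mem_facets.mp (hφ F₁ hF₁A).2).1 (mem_insert_self _ _))
  have hcount := card_union_add_card_inter (A ∪ A.image ψ) (facetsContaining K u)
  rw [card_union_of_disjoint hdisj, card_image_of_injOn hψinj] at hcount
  have hsub : A ∪ A.image ψ ∪ facetsContaining K u ⊆ facets K := union_subset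
    (union_subset (filter_subset _ _) (image_subset_iff.mpr fun F hF => (hφ F hF).2))
    (filter_subset _ _)
  have := card_le_card hsub
  have := (card_le_card hinter).trans (card_singleton _).le
  omega

theorem link_singleton (hK : IsPureFlagNoSquareNoFree K (d + 1)) {w : V}
    (hw : ({w} : Finset V) ∈ K) : IsPureFlagNoSquareNoFree (link K {w}) d :=
  ⟨hK.complex.link_singleton hw, hK.pure.link_singleton hK.complex,
    hK.flag.link_singleton hK.complex hw, hK.noSquare.link_singleton hK.complex hK.flag hw,
    hK.noFree.link_singleton hK.complex⟩

theorem five_le_card_facets (hK : IsPureFlagNoSquareNoFree K 1) : 5 ≤ (facets K).card := by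
  have hstar : ∀ w, ({w} : Finset V) ∈ K → 2 ≤ (facetsContaining K w).card := fun w hw => by
    simpa only [facetsContaining, singleton_subset_iff] using hK.noFree {w} hw (card_singleton w)
  obtain ⟨v, hv⟩ := hK.complex.exists_vertex hK.pure
  have := hK.two_mul_card_facetsContaining_add_le hstar hv
  have := hstar v hv
  omega

theorem fourteen_le_card_facets (hK : IsPureFlagNoSquareNoFree K 2) : 14 ≤ (facets K).card := by
  have hstar : ∀ w, ({w} : Finset V) ∈ K → 5 ≤ (facetsContaining K w).card := fun w hw =>
    card_facets_link_singleton hK.complex ▸ (hK.link_singleton hw).five_le_card_facets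
  obtain ⟨v, hv⟩ := hK.complex.exists_vertex hK.pure
  have := hK.two_mul_card_facetsContaining_add_le hstar hv
  have := hstar v hv
  omega

theorem le_card_facets (hK : IsPureFlagNoSquareNoFree K d) (hd : 2 ≤ d) :
    ((d : ℝ) + 4) * (25 / 12) ^ 2 ^ (d - 2) ≤ (facets K).card := by
  induction d, hd using Nat.le_induction generalizing K with
  | base =>
    have : (14 : ℝ) ≤ (facets K).card := by exact_mod_cast hK.fourteen_le_card_facets
    norm_num
    linarith
  | succ e he ih =>
    set B : ℝ := (25 / 12) ^ 2 ^ (e - 2)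
    have hstar : ∀ w, ({w} : Finset V) ∈ K → ((e : ℝ) + 4) * B ≤ (facetsContaining K w).card :=
      fun w hw => card_facets_link_singleton hK.complex ▸ ih (hK.link_singleton hw)
    obtain ⟨v, hv⟩ := hK.complex.exists_vertex hK.pure
    set m := ⌈((e : ℝ) + 4) * B⌉₊
    have hcount : m * m ≤ (facets K).card * (e + 1 + 1) :=
      (Nat.mul_le_mul_right m (Nat.ceil_le.mpr (hstar v hv))).trans
        (hK.card_facetsContaining_mul_le (fun w hw => Nat.ceil_le.mpr (hstar w hw)) v)
    have hm : ((e : ℝ) + 4) * B ≤ m := Nat.le_ceil _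
    have hB : 2 ^ (e + 1 - 2) = 2 ^ (e - 2) * 2 := by rw [← pow_succ]; congr 1; omega
    rw [hB, pow_mul]
    refine le_of_mul_le_mul_right (a := (e : ℝ) + 2) ?_ (by positivity)
    calc ((e + 1 : ℕ) + 4 : ℝ) * B ^ 2 * (e + 2) ≤ (((e : ℝ) + 4) * B) * (((e : ℝ) + 4) * B) := by
          push_cast; nlinarith [sq_nonneg B]
      _ ≤ m * m := mul_self_le_mul_self (by positivity) hm
      _ ≤ (facets K).card * (e + 2) := by exact_mod_cast hcount

end IsPureFlagNoSquareNoFree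

theorem facets_lower_bound_general {V : Type} [DecidableEq V] [Fintype V]
    (d : ℕ) (hd : 2 ≤ d) (K : Finset (Finset V))
    (hK : IsComplex K)
    (hpure : IsPure K d) (hflag : IsFlag K) (hns : NoSquare K)
    (hfree : NoFree K d) :
    ((25 : ℝ) / 12) ^ 2 ^ (d - 2) < (fNum K d : ℝ) := by
  have hbound := IsPureFlagNoSquareNoFree.le_card_facets ⟨hK, hpure, hflag, hns, hfree⟩ hd
  rw [hpure.fNum_eq_card_facets]
  refine lt_of_lt_of_le (lt_mul_of_one_lt_left (by positivity) ?_) hbound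
  linarith [(Nat.cast_nonneg d : (0 : ℝ) ≤ d)]

/-- A pure `d`-dimensional (`d ≥ 2`) flag-no-square simplicial complex with no
free `(d-1)`-faces has more than `(25/12) ^ (2 ^ (d-2))` facets. -/
theorem facets_lower_bound {V : Type} [DecidableEq V] [Fintype V]
    (d : ℕ) (hd : 2 ≤ d) (K : Finset (Finset V))
    (hK : IsComplex K) (hvert : ∀ v : V, ({v} : Finset V) ∈ K)
    (hpure : IsPure K d) (hflag : IsFlag K) (hns : NoSquare K)
    (hfree : NoFree K d) :
    ((25 : ℝ) / 12) ^ 2 ^ (d - 2) < (fNum K d : ℝ) :=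
  facets_lower_bound_general d hd K hK hpure hflag hns hfree
end

section
/- Let d ≥ 5 be an integer and let h_0, h_1, …, h_d be nonnegative integers satisfying the symmetry h_i = h_{d−i} for all i, with h_0 ≥ 1. Then C(d,2) · (Σ_{i=0}^{d} h_i) < 5 · (Σ_{i=0}^{d−2} C(d−i,2) · h_i). (Interpreting f_{d−1} = Σ_{i=0}^{d} h_i and f_{d−3} = Σ_{i=0}^{d−2} C(d−i,2) h_i as entries of the f-vector of a Gorenstein* complex with h-vector (h_i), this says the average number C(d,2)·f_{d−1}/f_{d−3} of facets containing a (d−3)-face is strictly less than 5.) -/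
/-!
By the symmetry `h_i = h_{d-i}`, the sum `Σ C(d-i,2) h_i` equals `Σ C(i,2) h_i`, so twice it is
`Σ (C(d-i,2) + C(i,2)) h_i`. Termwise, `2 C(a+b,2) ≤ 5 (C(a,2) + C(b,2))` whenever `a + b ≥ 5`,
and the term `i = 0` is strict because `h_0 ≥ 1`.
-/

open Finset

theorem two_mul_choose_two_add_le {a b : ℕ} (hab : 5 ≤ a + b) :
    2 * (a + b).choose 2 ≤ 5 * (a.choose 2 + b.choose 2) := by
  -- the real relaxation fails for `a = b` with `5 < a + b < 6`, so `a + b = 5` is checked directly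
  rcases hab.eq_or_lt with h5 | h6
  · have ha : a ≤ 5 := by omega
    obtain rfl : b = 5 - a := by omega
    interval_cases a <;> decide
  · have h6' : (6 : ℚ) ≤ a + b := by exact_mod_cast h6
    suffices (2 * (a + b).choose 2 : ℚ) ≤ 5 * (a.choose 2 + b.choose 2) by exact_mod_cast this
    push_cast [Nat.cast_choose_two]
    nlinarith [sq_nonneg ((a : ℚ) - b)]

theorem sum_range_reflect_mul_of_symm {M : Type*} [CommSemiring M] {d : ℕ} {h : ℕ → M}
    (hsym : ∀ i ≤ d, h i = h (d - i)) (f : ℕ → M) :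
    ∑ i ∈ range (d + 1), f (d - i) * h i = ∑ i ∈ range (d + 1), f i * h i := by
  rw [← sum_range_reflect (fun i => f i * h i)]
  refine sum_congr rfl fun i hi => ?_
  rw [hsym i (Nat.lt_succ_iff.mp (mem_range.mp hi)), add_tsub_cancel_right]

theorem sum_range_sub_one_choose_two_mul (d : ℕ) (h : ℕ → ℕ) :
    ∑ i ∈ range (d - 1), (d - i).choose 2 * h i = ∑ i ∈ range (d + 1), (d - i).choose 2 * h i := by
  refine sum_subset (range_subset_range.mpr (by omega)) fun i hi hni => ?_
  simp only [mem_range] at hi hni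
  rw [Nat.choose_eq_zero_of_lt (by omega), zero_mul]

/-- Averaging lemma for `N₂`: if `d ≥ 5` and `(h_i)` are nonnegative integers
with `h_i = h_{d-i}` and `h_0 ≥ 1`, then
`C(d,2) · Σ_{i=0}^d h_i < 5 · Σ_{i=0}^{d-2} C(d-i,2) · h_i`. -/
theorem average_lt_five (d : ℕ) (hd : 5 ≤ d) (h : ℕ → ℕ)
    (hsym : ∀ i ≤ d, h i = h (d - i)) (h0 : 1 ≤ h 0) :
    d.choose 2 * ∑ i ∈ Finset.range (d + 1), h i <
      5 * ∑ i ∈ Finset.range (d - 1), (d - i).choose 2 * h i := by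
  have hterm (i : ℕ) (hi : i ∈ range (d + 1)) :
      2 * d.choose 2 * h i ≤ 5 * ((d - i).choose 2 + i.choose 2) * h i := by
    have hid : d - i + i = d := Nat.sub_add_cancel (Nat.lt_succ_iff.mp (mem_range.mp hi))
    have hsplit := two_mul_choose_two_add_le (a := d - i) (b := i) (by omega)
    rw [hid] at hsplit
    exact Nat.mul_le_mul_right (h i) hsplit
  have hzero : 2 * d.choose 2 * h 0 < 5 * ((d - 0).choose 2 + (0 : ℕ).choose 2) * h 0 := by
    have hchoose : 0 < d.choose 2 := Nat.choose_pos (by omega)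
    simp only [Nat.sub_zero, Nat.choose_zero_succ, add_zero]
    gcongr; omega
  rw [sum_range_sub_one_choose_two_mul]
  refine Nat.lt_of_mul_lt_mul_left (a := 2) ?_
  calc 2 * (d.choose 2 * ∑ i ∈ range (d + 1), h i)
      = ∑ i ∈ range (d + 1), 2 * d.choose 2 * h i := by simp only [mul_sum, mul_assoc]
    _ < ∑ i ∈ range (d + 1), 5 * ((d - i).choose 2 + i.choose 2) * h i :=
        sum_lt_sum hterm ⟨0, by simp, hzero⟩
    _ = 5 * (∑ i ∈ range (d + 1), (d - i).choose 2 * h i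
          + ∑ i ∈ range (d + 1), i.choose 2 * h i) := by
        rw [← sum_add_distrib, mul_sum]
        exact sum_congr rfl fun i _ => by ring
    _ = 2 * (5 * ∑ i ∈ range (d + 1), (d - i).choose 2 * h i) := by
        rw [sum_range_reflect_mul_of_symm hsym (·.choose 2)]; ring
end

section
/- Let d ≥ 3 be an integer and let h_0, h_1, …, h_d be nonnegative integers satisfying the symmetry h_i = h_{d−i} for all i, with h_0 ≥ 1. Then C(d,2) · (Σ_{i=0}^{d} h_i) < 6 · (Σ_{i=0}^{d−2} C(d−i,2) · h_i). (Interpreting f_{d−1} = Σ_{i=0}^{d} h_i and f_{d−3} = Σ_{i=0}^{d−2} C(d−i,2) h_i as entries of the f-vector of a Gorenstein* complex with h-vector (h_i), this says the average number C(d,2)·f_{d−1}/f_{d−3} of facets containing a (d−3)-face is strictly less than 6.) -/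
/-!
Write `S = ∑_{i=0}^{d} C(d-i,2) h_i`; the terms `i = d-1, d` vanish, so `S` is the right-hand sum.
Reflecting `i ↦ d - i` and using `h_i = h_{d-i}` also gives `S = ∑ C(i,2) h_i`, so
`6 S = ∑ 3 (C(d-i,2) + C(i,2)) h_i`. Termwise, `C(a+b,2) ≤ 3 (C(a,2) + C(b,2))` whenever `a + b ≥ 3`,
strictly when `b = 0`; the term `i = 0` is nonzero because `h_0 ≥ 1`.
-/

open Finset

theorem Nat.add_choose_two_le (a b : ℕ) (hab : 3 ≤ a + b) :
    (a + b).choose 2 ≤ 3 * (a.choose 2 + b.choose 2) := by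
  suffices h : ((a + b).choose 2 : ℚ) ≤ 3 * (a.choose 2 + b.choose 2) by exact_mod_cast h
  have ha : (0 : ℚ) ≤ a * (a - 1) / 2 := by rw [← Nat.cast_choose_two]; positivity
  have hb : (0 : ℚ) ≤ b * (b - 1) / 2 := by rw [← Nat.cast_choose_two]; positivity
  simp only [Nat.cast_choose_two, Nat.cast_add]
  -- Integrality matters: over `ℚ` the inequality fails at `a = b = 3/2`.
  rcases lt_trichotomy a b with h | rfl | h
  · have : (a : ℚ) + 1 ≤ b := by exact_mod_cast h
    nlinarith
  · have : (2 : ℚ) ≤ a := by exact_mod_cast (show 2 ≤ a by omega)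
    nlinarith
  · have : (b : ℚ) + 1 ≤ a := by exact_mod_cast h
    nlinarith

theorem sum_range_succ_reflect_mul_of_symm {R : Type*} [Semiring R] (g h : ℕ → R) (d : ℕ)
    (hsym : ∀ i ≤ d, h i = h (d - i)) :
    ∑ i ∈ range (d + 1), g (d - i) * h i = ∑ i ∈ range (d + 1), g i * h i := by
  rw [← sum_range_reflect (fun i ↦ g i * h i)]
  refine sum_congr rfl fun i hi ↦ ?_
  rw [hsym i (Nat.lt_succ_iff.mp (mem_range.mp hi)), Nat.add_sub_cancel]

theorem sum_range_sub_choose_mul (d k : ℕ) (h : ℕ → ℕ) :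
    ∑ i ∈ range (d + 1 - k), (d - i).choose k * h i =
      ∑ i ∈ range (d + 1), (d - i).choose k * h i := by
  refine sum_subset (range_subset_range.mpr (Nat.sub_le _ _)) fun i hi hik ↦ ?_
  simp only [mem_range] at hi hik
  rw [Nat.choose_eq_zero_of_lt (by omega), zero_mul]

/-- Averaging lemma for `N₃`: if `d ≥ 3` and `(h_i)` are nonnegative integers
with `h_i = h_{d-i}` and `h_0 ≥ 1`, then
`C(d,2) · Σ_{i=0}^d h_i < 6 · Σ_{i=0}^{d-2} C(d-i,2) · h_i`. -/
theorem average_lt_six (d : ℕ) (hd : 3 ≤ d) (h : ℕ → ℕ)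
    (hsym : ∀ i ≤ d, h i = h (d - i)) (h0 : 1 ≤ h 0) :
    d.choose 2 * ∑ i ∈ Finset.range (d + 1), h i <
      6 * ∑ i ∈ Finset.range (d - 1), (d - i).choose 2 * h i := by
  set S := ∑ i ∈ range (d + 1), (d - i).choose 2 * h i
  have hS_trunc : ∑ i ∈ range (d - 1), (d - i).choose 2 * h i = S := sum_range_sub_choose_mul d 2 h
  have hS_reflect : ∑ i ∈ range (d + 1), i.choose 2 * h i = S :=
    (sum_range_succ_reflect_mul_of_symm (·.choose 2) h d hsym).symm
  have hterm : ∀ i ∈ range (d + 1), d.choose 2 * h i ≤ 3 * ((d - i).choose 2 + i.choose 2) * h i :=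
    fun i hi ↦ Nat.mul_le_mul_right _ <| by
      simpa [Nat.sub_add_cancel (Nat.lt_succ_iff.mp (mem_range.mp hi))] using
        Nat.add_choose_two_le (d - i) i (by omega)
  have hzero : d.choose 2 * h 0 < 3 * ((d - 0).choose 2 + (0 : ℕ).choose 2) * h 0 := by
    have : 0 < d.choose 2 * h 0 := Nat.mul_pos (Nat.choose_pos (by omega)) h0
    simp only [Nat.sub_zero, Nat.choose_zero_succ, add_zero, mul_assoc]
    omega
  calc d.choose 2 * ∑ i ∈ range (d + 1), h i = ∑ i ∈ range (d + 1), d.choose 2 * h i := mul_sum _ _ _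
    _ < ∑ i ∈ range (d + 1), 3 * ((d - i).choose 2 + i.choose 2) * h i :=
        sum_lt_sum hterm ⟨0, by simp, hzero⟩
    _ = 3 * (S + ∑ i ∈ range (d + 1), i.choose 2 * h i) := by
        rw [mul_add, mul_sum, mul_sum, ← sum_add_distrib]
        exact sum_congr rfl fun i _ ↦ by ring
    _ = 6 * ∑ i ∈ range (d - 1), (d - i).choose 2 * h i := by rw [hS_reflect, hS_trunc]; ring
end

section
/- Let Δ be a 2-dimensional flag-no-square simplicial complex, let e be a free edge of Δ, and let F be the unique 2-dimensional face of Δ containing e. Then the complex obtained from Δ by removing the two faces e and F (the elementary collapse of the pair (e,F)) is again a flag-no-square simplicial complex. -/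
open Finset

variable {V : Type} [DecidableEq V] [Fintype V]

section Collapse

variable {α : Type} {K : Finset (Finset α)} {e B : Finset α}

theorem eq_or_eq_of_subset_of_card_le_three (hdim : ∀ σ ∈ K, σ.card ≤ 3) (hecard : e.card = 2)
    (hfree : ∀ G ∈ K, G.card = 3 → e ⊆ G → G = B) :
    ∀ σ ∈ K, e ⊆ σ → σ = e ∨ σ = B := by
  intro σ hσ heσ
  have hle := card_le_card heσ
  rcases (by have := hdim σ hσ; omega : σ.card = 2 ∨ σ.card = 3) with h | h
  · exact Or.inl (eq_of_subset_of_card_le heσ (by omega)).symm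
  · exact Or.inr (hfree σ hσ h heσ)

variable [DecidableEq α]

theorem mem_erase_erase_of_card_lt {σ : Finset α} (heB : e ⊆ B) (hσ : σ ∈ K)
    (hcard : σ.card < e.card) : σ ∈ (K.erase e).erase B := by
  have hB : σ.card < B.card := hcard.trans_le (card_le_card heB)
  exact mem_erase.2 ⟨by rintro rfl; omega, mem_erase.2 ⟨by rintro rfl; omega, hσ⟩⟩

theorem subset_of_mem_of_notMem_erase_erase {σ : Finset α} (heB : e ⊆ B) (hσ : σ ∈ K)
    (hσ' : σ ∉ (K.erase e).erase B) : e ⊆ σ := by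
  by_cases hσe : σ = e
  · exact hσe.ge
  · have hσB : σ = B := by
      by_contra hσB
      exact hσ' (mem_erase.2 ⟨hσB, mem_erase.2 ⟨hσe, hσ⟩⟩)
    exact hσB ▸ heB

theorem isComplex_erase_erase (hK : IsComplex K) (he : e.Nonempty) (heB : e ⊆ B)
    (hcof : ∀ σ ∈ K, e ⊆ σ → σ = e ∨ σ = B) : IsComplex ((K.erase e).erase B) := by
  refine ⟨mem_erase_erase_of_card_lt heB hK.1 (by simpa using he.card_pos), ?_⟩
  intro σ hσ τ hτσ
  obtain ⟨hσB, hσe, hσK⟩ : σ ≠ B ∧ σ ≠ e ∧ σ ∈ K := by simpa [and_assoc] using hσ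
  have heσ : ¬ e ⊆ σ := fun h => (hcof σ hσK h).elim hσe hσB
  refine mem_erase.2 ⟨?_, mem_erase.2 ⟨?_, hK.2 σ hσK τ hτσ⟩⟩
  · rintro rfl
    exact heσ (heB.trans hτσ)
  · rintro rfl
    exact heσ hτσ

theorem isFlag_erase_erase (hflag : IsFlag K) (hecard : e.card = 2) (heB : e ⊆ B) :
    IsFlag ((K.erase e).erase B) := by
  intro τ hvert hedge
  have hτ : τ ∈ K := hflag τ (fun v hv => mem_of_mem_erase (mem_of_mem_erase (hvert v hv)))
    fun u hu w hw huw => mem_of_mem_erase (mem_of_mem_erase (hedge u hu w hw huw))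
  obtain ⟨u, w, huw, rfl⟩ := card_eq_two.1 hecard
  have heτ : ¬ {u, w} ⊆ τ := fun h =>
    (mem_erase.1 (mem_erase.1 (hedge u (h (by simp)) w (h (by simp)) huw)).2).1 rfl
  refine mem_erase.2 ⟨?_, mem_erase.2 ⟨?_, hτ⟩⟩
  · rintro rfl
    exact heτ heB
  · rintro rfl
    exact heτ subset_rfl

theorem insert_insert_singleton_mem_of_isFlag (hK : IsComplex K) (hflag : IsFlag K) {a b c : α}
    (hab : {a, b} ∈ K) (hbc : {b, c} ∈ K) (hac : {a, c} ∈ K) : {a, b, c} ∈ K := by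
  have hvert : ∀ x ∈ ({a, b, c} : Finset α), {x} ∈ K := by
    simp only [mem_insert, mem_singleton]
    rintro x (rfl | rfl | rfl)
    · exact hK.2 _ hab _ (by simp)
    · exact hK.2 _ hab _ (by simp)
    · exact hK.2 _ hbc _ (by simp)
  refine hflag _ hvert ?_
  simp only [mem_insert, mem_singleton]
  rintro x (rfl | rfl | rfl) y (rfl | rfl | rfl) hxy <;>
    first | exact absurd rfl hxy | assumption | (rw [pair_comm]; assumption)

/-- If the diagonal `{a, c}` of a 4-cycle `a b c d` contains `e`, then the triangles `abc` and
`acd` both contain `e`, so each is `e` or `B`; as `e ⊆ B`, one contains the other, which forces a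
coincidence among the four vertices. -/
theorem card_le_three_of_diagonal_superset (hK : IsComplex K) (hflag : IsFlag K) (heB : e ⊆ B)
    (hcof : ∀ σ ∈ K, e ⊆ σ → σ = e ∨ σ = B) {a b c d : α}
    (hab : {a, b} ∈ K) (hbc : {b, c} ∈ K) (hcd : {c, d} ∈ K) (hda : {d, a} ∈ K)
    (hac : {a, c} ∈ K) (he : e ⊆ {a, c}) : ({a, b, c, d} : Finset α).card ≤ 3 := by
  have habc := insert_insert_singleton_mem_of_isFlag hK hflag hab hbc hac
  have hacd := insert_insert_singleton_mem_of_isFlag hK hflag hac hcd (pair_comm d a ▸ hda)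
  have hchain : ∀ σ τ : Finset α, (σ = e ∨ σ = B) → (τ = e ∨ τ = B) → σ ⊆ τ ∨ τ ⊆ σ := by
    rintro σ τ (rfl | rfl) (rfl | rfl) <;> simp [heB]
  rcases hchain _ _ (hcof _ habc (he.trans (by simp [insert_subset_iff])))
      (hcof _ hacd (he.trans (by simp [insert_subset_iff]))) with h | h
  · have hb : b ∈ ({a, c, d} : Finset α) := h (by simp)
    refine (card_le_card (t := {a, c, d}) ?_).trans card_le_three
    intro x hx
    simp only [mem_insert, mem_singleton] at hx
    rcases hx with rfl | rfl | rfl | rfl <;> simp [hb]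
  · have hd : d ∈ ({a, b, c} : Finset α) := h (by simp)
    refine (card_le_card (t := {a, b, c}) ?_).trans card_le_three
    intro x hx
    simp only [mem_insert, mem_singleton] at hx
    rcases hx with rfl | rfl | rfl | rfl <;> simp [hd]

theorem noSquare_erase_erase (hK : IsComplex K) (hflag : IsFlag K) (hns : NoSquare K)
    (heB : e ⊆ B) (hcof : ∀ σ ∈ K, e ⊆ σ → σ = e ∨ σ = B) :
    NoSquare ((K.erase e).erase B) := by
  rintro ⟨a, b, c, d, hcard, hab, hbc, hcd, hda, hac, hbd⟩
  replace hab := mem_of_mem_erase (mem_of_mem_erase hab)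
  replace hbc := mem_of_mem_erase (mem_of_mem_erase hbc)
  replace hcd := mem_of_mem_erase (mem_of_mem_erase hcd)
  replace hda := mem_of_mem_erase (mem_of_mem_erase hda)
  by_cases hacK : {a, c} ∈ K
  · have := card_le_three_of_diagonal_superset hK hflag heB hcof hab hbc hcd hda hacK
      (subset_of_mem_of_notMem_erase_erase heB hacK hac)
    omega
  by_cases hbdK : {b, d} ∈ K
  · have := card_le_three_of_diagonal_superset hK hflag heB hcof hbc hcd hda hab hbdK
      (subset_of_mem_of_notMem_erase_erase heB hbdK hbd)
    have hrot : ({b, c, d, a} : Finset α) = {a, b, c, d} := by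
      ext x; simp only [mem_insert, mem_singleton]; tauto
    rw [hrot] at this
    omega
  exact hns ⟨a, b, c, d, hcard, hab, hbc, hcd, hda, hacK, hbdK⟩

end Collapse

theorem collapse_free_edge_general {V : Type} [DecidableEq V]
    (K : Finset (Finset V))
    (hK : IsComplex K) (hvert : ∀ v : V, ({v} : Finset V) ∈ K)
    -- `K` is 2-dimensional
    (hdim : ∀ σ ∈ K, σ.card ≤ 3)
    (hflag : IsFlag K) (hns : NoSquare K)
    (e B : Finset V) (hecard : e.card = 2)
    (heB : e ⊆ B)
    -- `e` is free: `B` is the unique 2-face containing `e`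
    (hfree : ∀ G ∈ K, G.card = 3 → e ⊆ G → G = B) :
    IsComplex ((K.erase e).erase B) ∧
      (∀ v : V, ({v} : Finset V) ∈ (K.erase e).erase B) ∧
      IsFlag ((K.erase e).erase B) ∧ NoSquare ((K.erase e).erase B) := by
  have hcof := eq_or_eq_of_subset_of_card_le_three hdim hecard hfree
  have he : e.Nonempty := card_pos.1 (by omega)
  exact ⟨isComplex_erase_erase hK he heB hcof,
    fun v => mem_erase_erase_of_card_lt heB (hvert v) (by simp [hecard]),
    isFlag_erase_erase hflag hecard heB, noSquare_erase_erase hK hflag hns heB hcof⟩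

/-- Collapsing a free edge of a 2-dimensional flag-no-square simplicial
complex, together with the unique triangle containing it, yields again a
flag-no-square simplicial complex. -/
theorem collapse_free_edge {V : Type} [DecidableEq V] [Fintype V]
    (K : Finset (Finset V))
    (hK : IsComplex K) (hvert : ∀ v : V, ({v} : Finset V) ∈ K)
    -- `K` is 2-dimensional
    (hdim : ∀ σ ∈ K, σ.card ≤ 3) (hdim' : ∃ σ ∈ K, σ.card = 3)
    (hflag : IsFlag K) (hns : NoSquare K)
    (e B : Finset V) (he : e ∈ K) (hecard : e.card = 2)
    (hB : B ∈ K) (hBcard : B.card = 3) (heB : e ⊆ B)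
    -- `e` is free: `B` is the unique 2-face containing `e`
    (hfree : ∀ G ∈ K, G.card = 3 → e ⊆ G → G = B) :
    IsComplex ((K.erase e).erase B) ∧
      (∀ v : V, ({v} : Finset V) ∈ (K.erase e).erase B) ∧
      IsFlag ((K.erase e).erase B) ∧ NoSquare ((K.erase e).erase B) :=
  collapse_free_edge_general K hK hvert hdim hflag hns e B hecard heB hfree
end

section
/- Let Δ be a 2-dimensional flag-no-square simplicial complex on n vertices, with vertex set linearly ordered, and let K be a field. If the kernel of the simplicial boundary map ∂_2 from the free K-module on the 2-faces of Δ to the free K-module on the edges of Δ is nonzero (equivalently, H_2(Δ; K) ≠ 0), then n ≥ 12. -/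
open Finset

variable {V : Type} [DecidableEq V] [Fintype V]

/-- The simplicial boundary operator (with respect to a linear order on the
vertices): `(∂ c)(σ) = Σ_{v ∉ σ} (-1)^{|{k ∈ σ ∪ {v} : k < v}|} · c(σ ∪ {v})`. -/
def bdry (F : Type) [Field F] {V : Type} [LinearOrder V] [Fintype V] [DecidableEq V]
    (c : Finset V → F) (σ : Finset V) : F :=
  ∑ v ∈ σᶜ, (-1 : F) ^ ((insert v σ).filter fun k => k < v).card * c (insert v σ)

/-!
Let `T` be the set of triangles on which the cycle is nonzero and `G` the 1-skeleton of `K`: it has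
no `K₄` (flag of dimension 2) and no induced square. Then two non-adjacent vertices of `G` have at
most two common neighbours, and every edge of a triangle of `T` lies on a second one.

Fix a vertex `u` of a triangle of `T`. Its link in `T` is a graph without triangles, 4-cycles or
vertices of degree one, so it has at least five vertices, and at least as many edges (triangles
through `u`) as vertices. Each triangle `t ∋ u` has a second triangle across its edge opposite to
`u`, whose third vertex is not adjacent to `u`; distinct `t` give distinct such vertices, as
otherwise `u` and that vertex would have three common neighbours. So the triangles of `T` cover at
least `1 + #link + #star ≥ 11` vertices, and on at most eleven vertices every vertex would lie on
exactly five triangles: counting incidences, `11 * 5 = 3 * #T`, which is absurd.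
-/

lemma Finset.exists_eq_triple_of_card_eq_three {α : Type*} [DecidableEq α] {t : Finset α}
    {u w : α} (ht : #t = 3) (hu : u ∈ t) (hw : w ∈ t) (huw : u ≠ w) :
    ∃ y, y ≠ u ∧ y ≠ w ∧ t = {u, w, y} := by
  have hwu : w ∈ t.erase u := mem_erase.2 ⟨huw.symm, hw⟩
  obtain ⟨y, hy⟩ := card_eq_one.1 (show #((t.erase u).erase w) = 1 by
    rw [card_erase_of_mem hwu, card_erase_of_mem hu, ht])
  have hyt : y ∈ (t.erase u).erase w := hy ▸ mem_singleton_self y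
  refine ⟨y, ne_of_mem_erase (mem_of_mem_erase hyt), ne_of_mem_erase hyt, ?_⟩
  rw [← insert_erase hu, ← insert_erase hwu, hy]

namespace SimpleGraph

section Graph

variable {V : Type*} {G : SimpleGraph V}

lemma CliqueFree.not_adj_of_four [DecidableEq V] (h : G.CliqueFree 4) {a b c d : V}
    (hab : G.Adj a b) (hac : G.Adj a c) (had : G.Adj a d) (hbc : G.Adj b c) (hbd : G.Adj b d) :
    ¬G.Adj c d := fun hcd =>
  h _ ((is3Clique_triple_iff.2 ⟨hbc, hbd, hcd⟩).insert (a := a) (by simp [hab, hac, had]))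

def InducedSquareFree (G : SimpleGraph V) : Prop :=
  ∀ ⦃a b c d⦄, G.Adj a b → G.Adj b c → G.Adj c d → G.Adj d a → a ≠ c → b ≠ d →
    G.Adj a c ∨ G.Adj b d

namespace InducedSquareFree

lemma adj_of_common_neighbors (hsq : G.InducedSquareFree) {u x a b : V} (hux : ¬G.Adj u x)
    (hne : u ≠ x) (hab : a ≠ b) (hua : G.Adj u a) (hax : G.Adj a x) (hub : G.Adj u b)
    (hbx : G.Adj b x) : G.Adj a b :=
  (hsq hua hax hbx.symm hub.symm hne hab).resolve_left hux

lemma adj_of_three_common_neighbors [DecidableEq V] (hsq : G.InducedSquareFree)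
    (hK4 : G.CliqueFree 4) {u x p q r : V} (hne : u ≠ x) (hpq : p ≠ q) (hpr : p ≠ r)
    (hqr : q ≠ r) (hup : G.Adj u p) (hpx : G.Adj p x) (huq : G.Adj u q) (hqx : G.Adj q x)
    (hur : G.Adj u r) (hrx : G.Adj r x) : G.Adj u x := by
  by_contra hux
  exact hK4.not_adj_of_four hup huq hur (hsq.adj_of_common_neighbors hux hne hpq hup hpx huq hqx)
    (hsq.adj_of_common_neighbors hux hne hpr hup hpx hur hrx)
    (hsq.adj_of_common_neighbors hux hne hqr huq hqx hur hrx)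

end InducedSquareFree

lemma five_le_card_of_no_short_cycle (H : SimpleGraph V) (h3 : H.CliqueFree 3)
    (h4 : ∀ ⦃a b c d⦄, H.Adj a b → H.Adj b c → H.Adj c d → H.Adj d a → a ≠ c → b ≠ d → False)
    (hdeg : ∀ ⦃a b⦄, H.Adj a b → ∃ c ≠ b, H.Adj a c) {a b : V} (hab : H.Adj a b)
    {s : Finset V} (hs : ∀ ⦃x y⦄, H.Adj x y → x ∈ s) : 5 ≤ #s := by
  classical
  have triangle_free : ∀ ⦃x y z⦄, H.Adj x y → H.Adj y z → ¬H.Adj x z := fun x y z hxy hyz hxz =>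
    h3 _ (is3Clique_triple_iff.2 ⟨hxy, hxz, hyz⟩)
  obtain ⟨c, hca, hbc⟩ := hdeg hab.symm
  obtain ⟨d, hdb, had⟩ := hdeg hab
  obtain ⟨e, heb, hce⟩ := hdeg hbc.symm
  have hcd : c ≠ d := by rintro rfl; exact triangle_free hab hbc had
  have hea : e ≠ a := by rintro rfl; exact triangle_free hab hbc hce.symm
  have hed : e ≠ d := by rintro rfl; exact h4 hab hbc hce had.symm hca.symm hdb.symm
  have hsub : ({d, a, b, c, e} : Finset V) ⊆ s := by
    simp only [insert_subset_iff, singleton_subset_iff]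
    exact ⟨hs had.symm, hs hab, hs hbc, hs hce, hs hce.symm⟩
  refine le_trans (le_of_eq ?_) (card_le_card hsub)
  rw [card_insert_of_notMem (by simp [had.ne.symm, hdb, hcd.symm, hed.symm]),
    card_insert_of_notMem (by simp [hab.ne, hca.symm, hea.symm]),
    card_insert_of_notMem (by simp [hbc.ne, heb.symm]),
    card_insert_of_notMem (by simp [hce.ne]), card_singleton]

end Graph

section Triangles

variable {V : Type*} [DecidableEq V]

def vertexStar (T : Finset (Finset V)) (u : V) : Finset (Finset V) :=
  T.filter (u ∈ ·)

def linkVertices (T : Finset (Finset V)) (u : V) : Finset V :=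
  (vertexStar T u).biUnion (·.erase u)

lemma mem_linkVertices {T : Finset (Finset V)} {u w : V} :
    w ∈ linkVertices T u ↔ ∃ t ∈ T, u ∈ t ∧ w ∈ t ∧ w ≠ u := by
  simp only [linkVertices, vertexStar, mem_biUnion, mem_filter, mem_erase]
  aesop

def linkGraph (T : Finset (Finset V)) (u : V) : SimpleGraph V where
  Adj a b := a ≠ b ∧ {u, a, b} ∈ T
  symm := ⟨fun a b h => ⟨h.1.symm, by rw [pair_comm]; exact h.2⟩⟩
  loopless := ⟨fun a h => h.1 rfl⟩

/-- Models the support of a nonzero 2-cycle, which has no free edge. -/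
structure IsClosedTriangleFamily (G : SimpleGraph V) (T : Finset (Finset V)) : Prop where
  isNClique : ∀ t ∈ T, G.IsNClique 3 t
  exists_insert_erase : ∀ t ∈ T, ∀ u ∈ t, ∃ x ≠ u, insert x (t.erase u) ∈ T

namespace IsClosedTriangleFamily

variable {G : SimpleGraph V} {T : Finset (Finset V)}

lemma card_eq (hT : G.IsClosedTriangleFamily T) {t : Finset V} (ht : t ∈ T) : #t = 3 :=
  (hT.isNClique t ht).card_eq

lemma adj (hT : G.IsClosedTriangleFamily T) {t : Finset V} (ht : t ∈ T) {a b : V}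
    (ha : a ∈ t) (hb : b ∈ t) (hab : a ≠ b) : G.Adj a b :=
  (hT.isNClique t ht).isClique ha hb hab

lemma triple_adj (hT : G.IsClosedTriangleFamily T) {u a b : V} (h : {u, a, b} ∈ T) :
    G.Adj u a ∧ G.Adj u b ∧ G.Adj a b :=
  is3Clique_triple_iff.1 (hT.isNClique _ h)

lemma adj_of_mem_linkVertices (hT : G.IsClosedTriangleFamily T) {u w : V}
    (hw : w ∈ linkVertices T u) : G.Adj u w := by
  obtain ⟨t, ht, hu, hw, hwu⟩ := mem_linkVertices.1 hw
  exact hT.adj ht hu hw hwu.symm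

lemma exists_ne_mem_and_mem (hT : G.IsClosedTriangleFamily T) {t : Finset V} (ht : t ∈ T)
    {u w : V} (hu : u ∈ t) (hw : w ∈ t) : ∃ t' ∈ T, t' ≠ t ∧ u ∈ t' ∧ w ∈ t' := by
  obtain ⟨y, hy, hyw⟩ := Finset.exists_mem_ne (s := t.erase u)
    (by rw [card_erase_of_mem hu, hT.card_eq ht]; decide) w
  obtain ⟨z, hzy, hz⟩ := hT.exists_insert_erase t ht y (mem_of_mem_erase hy)
  have hyu : y ≠ u := ne_of_mem_erase hy
  refine ⟨_, hz, fun h => ?_, by simp [hu, hyu.symm], by simp [hw, hyw.symm]⟩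
  have hyt := mem_of_mem_erase hy
  rw [← h] at hyt
  simp [hzy.symm] at hyt

lemma linkGraph_exists_adj_ne (hT : G.IsClosedTriangleFamily T) {u a b : V}
    (hab : (linkGraph T u).Adj a b) : ∃ c ≠ b, (linkGraph T u).Adj a c := by
  have hua := (hT.triple_adj hab.2).1
  obtain ⟨t', ht', hne, hu, ha⟩ :=
    hT.exists_ne_mem_and_mem (w := a) hab.2 (mem_insert_self u _) (by simp)
  obtain ⟨c, hcu, hca, rfl⟩ :=
    Finset.exists_eq_triple_of_card_eq_three (hT.card_eq ht') hu ha hua.ne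
  exact ⟨c, by rintro rfl; exact hne rfl, hca.symm, ht'⟩

lemma linkGraph_cliqueFree_three (hT : G.IsClosedTriangleFamily T) (hK4 : G.CliqueFree 4)
    (u : V) : (linkGraph T u).CliqueFree 3 := by
  intro s hs
  obtain ⟨a, b, c, hab, hac, hbc, rfl⟩ := is3Clique_iff.1 hs
  obtain ⟨hua, hub, hab⟩ := hT.triple_adj hab.2
  obtain ⟨-, huc, hac⟩ := hT.triple_adj hac.2
  obtain ⟨-, -, hbc⟩ := hT.triple_adj hbc.2
  exact hK4.not_adj_of_four hua hub huc hab hac hbc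

lemma linkGraph_not_square (hT : G.IsClosedTriangleFamily T) (hK4 : G.CliqueFree 4)
    (hsq : G.InducedSquareFree) {u a b c d : V} (hab : (linkGraph T u).Adj a b)
    (hbc : (linkGraph T u).Adj b c) (hcd : (linkGraph T u).Adj c d)
    (hda : (linkGraph T u).Adj d a) (hac : a ≠ c) (hbd : b ≠ d) : False := by
  obtain ⟨hua, hub, hab⟩ := hT.triple_adj hab.2
  obtain ⟨-, huc, hbc⟩ := hT.triple_adj hbc.2
  obtain ⟨-, hud, hcd⟩ := hT.triple_adj hcd.2
  obtain ⟨-, -, hda⟩ := hT.triple_adj hda.2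
  rcases hsq hab hbc hcd hda hac hbd with hac | hbd
  · exact hK4.not_adj_of_four hua hub huc hab hac hbc
  · exact hK4.not_adj_of_four hub huc hud hbc hbd hcd

lemma five_le_card_linkVertices (hT : G.IsClosedTriangleFamily T) (hK4 : G.CliqueFree 4)
    (hsq : G.InducedSquareFree) {t : Finset V} (ht : t ∈ T) {u : V} (hu : u ∈ t) :
    5 ≤ #(linkVertices T u) := by
  obtain ⟨a, ha, hau⟩ := Finset.exists_mem_ne (by rw [hT.card_eq ht]; decide) u
  obtain ⟨b, hbu, hba, rfl⟩ :=
    Finset.exists_eq_triple_of_card_eq_three (hT.card_eq ht) hu ha hau.symm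
  refine (linkGraph T u).five_le_card_of_no_short_cycle (hT.linkGraph_cliqueFree_three hK4 u)
    (fun _ _ _ _ => hT.linkGraph_not_square hK4 hsq) (fun _ _ => hT.linkGraph_exists_adj_ne)
    (a := a) (b := b) ⟨hba.symm, ht⟩ fun x y hxy => mem_linkVertices.2 ?_
  exact ⟨_, hxy.2, mem_insert_self u _, by simp, (hT.triple_adj hxy.2).1.ne.symm⟩

lemma card_linkVertices_le_card_vertexStar (hT : G.IsClosedTriangleFamily T) (u : V) :
    #(linkVertices T u) ≤ #(vertexStar T u) := by
  have hdeg : ∀ w ∈ linkVertices T u, 2 ≤ #(bipartiteAbove (· ∈ ·) (vertexStar T u) w) := by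
    intro w hw
    obtain ⟨t, ht, hu, hw, -⟩ := mem_linkVertices.1 hw
    obtain ⟨t', ht', hne, hu', hw'⟩ := hT.exists_ne_mem_and_mem ht hu hw
    refine one_lt_card.2 ⟨t', ?_, t, ?_, hne⟩ <;> simp [bipartiteAbove, vertexStar, *]
  have hsize : ∀ t ∈ vertexStar T u, #(bipartiteBelow (· ∈ ·) (linkVertices T u) t) ≤ 2 := by
    intro t ht
    obtain ⟨ht, hu⟩ := mem_filter.1 ht
    calc #(bipartiteBelow _ _ t) ≤ #(t.erase u) := card_le_card fun w hw => ?_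
      _ = 2 := by rw [card_erase_of_mem hu, hT.card_eq ht]
    obtain ⟨hw, hwt⟩ := mem_filter.1 hw
    obtain ⟨-, -, -, -, hwu⟩ := mem_linkVertices.1 hw
    exact mem_erase.2 ⟨hwu, hwt⟩
  have := card_mul_le_card_mul _ hdeg hsize
  omega

lemma exists_opposite_vertex (hT : G.IsClosedTriangleFamily T) (hK4 : G.CliqueFree 4)
    {t : Finset V} (ht : t ∈ T) {u : V} (hu : u ∈ t) :
    ∃ x ∈ T.biUnion id, x ≠ u ∧ ¬G.Adj u x ∧ ∀ y ∈ t, y ≠ u → G.Adj y x := by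
  obtain ⟨x, hxu, hx⟩ := hT.exists_insert_erase t ht u hu
  have hux : ¬G.Adj u x := fun hux =>
    hK4 _ ((hT.isNClique _ hx).insert (a := u) fun b hb => by
      rcases mem_insert.1 hb with rfl | hb
      · exact hux
      · exact hT.adj ht hu (mem_of_mem_erase hb) (ne_of_mem_erase hb).symm)
  refine ⟨x, mem_biUnion.2 ⟨_, hx, mem_insert_self x _⟩, hxu, hux, fun y hy hyu => ?_⟩
  have hyx : y ≠ x := fun h => hux (h ▸ hT.adj ht hu hy hyu.symm)
  exact hT.adj hx (mem_insert_of_mem (mem_erase.2 ⟨hyu, hy⟩)) (mem_insert_self x _) hyx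
lemma eq_of_forall_adj_of_not_adj (hT : G.IsClosedTriangleFamily T) (hK4 : G.CliqueFree 4)
    (hsq : G.InducedSquareFree) {t t' : Finset V} (ht : t ∈ T) (ht' : t' ∈ T) {u x : V}
    (hu : u ∈ t) (hu' : u ∈ t') (hux : u ≠ x) (hnadj : ¬G.Adj u x)
    (hx : ∀ y ∈ t, y ≠ u → G.Adj y x) (hx' : ∀ y ∈ t', y ≠ u → G.Adj y x) : t = t' := by
  by_contra hne
  obtain ⟨r, hrt', hrt⟩ : ∃ r ∈ t', r ∉ t := by
    by_contra! h
    exact hne (eq_of_subset_of_card_le h (by rw [hT.card_eq ht, hT.card_eq ht'])).symm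
  have hru : r ≠ u := fun h => hrt (h ▸ hu)
  obtain ⟨p, hp, hpu⟩ := Finset.exists_mem_ne (by rw [hT.card_eq ht]; decide) u
  obtain ⟨q, hqu, hqp, rfl⟩ :=
    Finset.exists_eq_triple_of_card_eq_three (hT.card_eq ht) hu hp hpu.symm
  exact hnadj (hsq.adj_of_three_common_neighbors hK4 hux hqp.symm
    (by rintro rfl; simp at hrt) (by rintro rfl; simp at hrt) (hT.adj ht hu hp hpu.symm)
    (hx p hp hpu) (hT.adj ht hu (by simp) hqu.symm) (hx q (by simp) hqu)
    (hT.adj ht' hu' hrt' hru.symm) (hx' r hrt' hru))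

lemma one_add_card_linkVertices_add_card_vertexStar_le (hT : G.IsClosedTriangleFamily T)
    (hK4 : G.CliqueFree 4) (hsq : G.InducedSquareFree) {u : V} (hu : u ∈ T.biUnion id) :
    1 + #(linkVertices T u) + #(vertexStar T u) ≤ #(T.biUnion id) := by
  have : Nonempty V := ⟨u⟩
  choose! x hxW hxu hux hadj using fun t (ht : t ∈ vertexStar T u) =>
    hT.exists_opposite_vertex hK4 (mem_filter.1 ht).1 (mem_filter.1 ht).2
  have hinj : Set.InjOn x (vertexStar T u) := fun t ht t' ht' hxx =>
    hT.eq_of_forall_adj_of_not_adj hK4 hsq (mem_filter.1 ht).1 (mem_filter.1 ht').1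
      (mem_filter.1 ht).2 (mem_filter.1 ht').2 (hxu t ht).symm (hux t ht) (hadj t ht)
      (hxx ▸ hadj t' ht')
  have hu_link : u ∉ linkVertices T u := fun h => by
    obtain ⟨-, -, -, -, h⟩ := mem_linkVertices.1 h
    exact h rfl
  have hdisj : Disjoint (insert u (linkVertices T u)) ((vertexStar T u).image x) := by
    refine Finset.disjoint_left.2 fun w hw hwx => ?_
    obtain ⟨t, ht, rfl⟩ := mem_image.1 hwx
    rcases mem_insert.1 hw with h | h
    exacts [hxu t ht h, hux t ht (hT.adj_of_mem_linkVertices h)]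
  calc 1 + #(linkVertices T u) + #(vertexStar T u)
      = #(insert u (linkVertices T u) ∪ (vertexStar T u).image x) := by
        rw [card_union_of_disjoint hdisj, card_insert_of_notMem hu_link, card_image_of_injOn hinj]
        ring
    _ ≤ #(T.biUnion id) := by
        refine card_le_card (union_subset (insert_subset hu fun w hw => ?_) fun w hw => ?_)
        · obtain ⟨t, ht, -, hw, -⟩ := mem_linkVertices.1 hw
          exact mem_biUnion.2 ⟨t, ht, hw⟩
        · obtain ⟨t, ht, rfl⟩ := mem_image.1 hw
          exact hxW t ht

theorem twelve_le_card [Fintype V] (hT : G.IsClosedTriangleFamily T) (hK4 : G.CliqueFree 4)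
    (hsq : G.InducedSquareFree) (hne : T.Nonempty) : 12 ≤ Fintype.card V := by
  by_contra! hV
  have hW := card_le_univ (T.biUnion id)
  have hstar : ∀ u ∈ T.biUnion id, #(vertexStar T u) = 5 ∧ #(T.biUnion id) = 11 := by
    intro u hu
    obtain ⟨t, ht, hut⟩ := mem_biUnion.1 hu
    have := hT.five_le_card_linkVertices hK4 hsq ht hut
    have := hT.card_linkVertices_le_card_vertexStar u
    have := hT.one_add_card_linkVertices_add_card_vertexStar_le hK4 hsq hu
    omega
  obtain ⟨t, ht⟩ := hne
  obtain ⟨u, hu⟩ : t.Nonempty := card_pos.1 (by rw [hT.card_eq ht]; decide)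
  have hcount : #(T.biUnion id) * 5 = #T * 3 :=
    card_mul_eq_card_mul (fun u t => u ∈ t) (fun u hu => (hstar u hu).1) fun t ht => by
      have hsub : t ⊆ T.biUnion id := subset_biUnion_of_mem id ht
      rw [bipartiteBelow, filter_mem_eq_inter, inter_eq_right.2 hsub, hT.card_eq ht]
  have := (hstar u (mem_biUnion.2 ⟨t, ht, hu⟩)).2
  omega

end IsClosedTriangleFamily

end Triangles

end SimpleGraph

section Skeleton

variable {V : Type} [DecidableEq V]

def skeleton (K : Finset (Finset V)) : SimpleGraph V where
  Adj u w := u ≠ w ∧ {u, w} ∈ K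
  symm := ⟨fun u w h => ⟨h.1.symm, by rw [pair_comm]; exact h.2⟩⟩
  loopless := ⟨fun u h => h.1 rfl⟩

lemma cliqueFree_skeleton {K : Finset (Finset V)} {d : ℕ} (hflag : IsFlag K)
    (hvert : ∀ v : V, {v} ∈ K) (hdim : ∀ σ ∈ K, #σ ≤ d) : (skeleton K).CliqueFree (d + 1) := by
  intro s hs
  have := hdim s (hflag s (fun v _ => hvert v) fun u hu w hw huw => (hs.isClique hu hw huw).2)
  have := hs.card_eq
  omega

lemma inducedSquareFree_skeleton {K : Finset (Finset V)} (hns : NoSquare K) :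
    (skeleton K).InducedSquareFree := by
  intro a b c d hab hbc hcd hda hac hbd
  by_contra! h
  refine hns ⟨a, b, c, d, ?_, hab.2, hbc.2, hcd.2, hda.2, fun h' => h.1 ⟨hac, h'⟩,
    fun h' => h.2 ⟨hbd, h'⟩⟩
  rw [card_insert_of_notMem (by simp [hab.1, hac, hda.1.symm]),
    card_insert_of_notMem (by simp [hbc.1, hbd]), card_insert_of_notMem (by simp [hcd.1]),
    card_singleton]

end Skeleton

lemma exists_ne_insert_erase_of_bdry_eq_zero {V : Type} [LinearOrder V] [Fintype V]
    [DecidableEq V] {F : Type} [Field F] {c : Finset V → F} {t : Finset V} {u : V} (hu : u ∈ t)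
    (ht : c t ≠ 0) (h : bdry F c (t.erase u) = 0) : ∃ x ≠ u, c (insert x (t.erase u)) ≠ 0 := by
  by_contra! hx
  rw [bdry, sum_eq_single_of_mem u (by simp) fun x _ hxu => by rw [hx x hxu, mul_zero],
    insert_erase hu] at h
  exact ht ((mul_eq_zero.1 h).resolve_left (pow_ne_zero _ (neg_ne_zero.2 one_ne_zero)))

lemma isClosedTriangleFamily_support {V : Type} [LinearOrder V] [Fintype V] [DecidableEq V]
    {F : Type} [Field F] [DecidableEq F] {K : Finset (Finset V)} (hK : IsComplex K)
    {c : Finset V → F} (hsupp : ∀ σ, c σ ≠ 0 → σ ∈ K ∧ #σ = 3)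
    (hcycle : ∀ τ : Finset V, #τ = 2 → bdry F c τ = 0) :
    (skeleton K).IsClosedTriangleFamily (univ.filter (c · ≠ 0)) := by
  refine ⟨fun t ht => ?_, fun t ht u hu => ?_⟩
  · obtain ⟨htK, ht3⟩ := hsupp t (mem_filter.1 ht).2
    refine ⟨fun a ha b hb hab => ⟨hab, hK.2 t htK _ ?_⟩, ht3⟩
    exact insert_subset_iff.2 ⟨ha, singleton_subset_iff.2 hb⟩
  · have ht := (mem_filter.1 ht).2
    obtain ⟨x, hxu, hx⟩ := exists_ne_insert_erase_of_bdry_eq_zero hu ht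
      (hcycle _ (by rw [card_erase_of_mem hu, (hsupp t ht).2]))
    exact ⟨x, hxu, mem_filter.2 ⟨mem_univ _, hx⟩⟩

theorem twelve_vertices_general {V : Type} [LinearOrder V] [Fintype V] [DecidableEq V]
    (F : Type) [Field F] (K : Finset (Finset V))
    (hK : IsComplex K) (hvert : ∀ v : V, ({v} : Finset V) ∈ K)
    -- `K` is 2-dimensional
    (hdim : ∀ σ ∈ K, σ.card ≤ 3)
    (hflag : IsFlag K) (hns : NoSquare K)
    -- a nonzero 2-chain in the kernel of `∂₂`
    (c : Finset V → F) (hsupp : ∀ σ : Finset V, c σ ≠ 0 → σ ∈ K ∧ σ.card = 3)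
    (hc : c ≠ 0)
    (hcycle : ∀ τ : Finset V, τ.card = 2 → bdry F c τ = 0) :
    12 ≤ Fintype.card V := by
  classical
  obtain ⟨σ, hσ⟩ := Function.ne_iff.1 hc
  exact (isClosedTriangleFamily_support hK hsupp hcycle).twelve_le_card
    (cliqueFree_skeleton hflag hvert hdim) (inducedSquareFree_skeleton hns)
    ⟨σ, mem_filter.2 ⟨mem_univ σ, hσ⟩⟩

/-- If a 2-dimensional flag-no-square simplicial complex carries a nonzero
2-cycle over a field (i.e. `H₂(Δ; F) ≠ 0`), then it has at least 12 vertices. -/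
theorem twelve_vertices {V : Type} [LinearOrder V] [Fintype V] [DecidableEq V]
    (F : Type) [Field F] (K : Finset (Finset V))
    (hK : IsComplex K) (hvert : ∀ v : V, ({v} : Finset V) ∈ K)
    -- `K` is 2-dimensional
    (hdim : ∀ σ ∈ K, σ.card ≤ 3) (hdim' : ∃ σ ∈ K, σ.card = 3)
    (hflag : IsFlag K) (hns : NoSquare K)
    -- a nonzero 2-chain in the kernel of `∂₂`
    (c : Finset V → F) (hsupp : ∀ σ : Finset V, c σ ≠ 0 → σ ∈ K ∧ σ.card = 3)
    (hc : c ≠ 0)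
    (hcycle : ∀ τ : Finset V, τ.card = 2 → bdry F c τ = 0) :
    12 ≤ Fintype.card V :=
  twelve_vertices_general F K hK hvert hdim hflag hns c hsupp hc hcycle
end
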